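/- (Main theorem.) Suppose 0 < ℓ ≤ r ≤ 1. Define Ā = A if ⌈1/r⌉ ≤ 1/ℓ (the good region), and Ā = A/(r·⌊1/r⌋) otherwise, where A = Σ_{i=1}^n A_i. Then the optimal power peak satisfies Ā ≤ P_opt ≤ Ā + A_max/ℓ, where A_max = max_i A_i. -/

import Mathlib

open Finset Set

/-- A scheduling policy for `n` demands with malleability parameters `l ≤ r`:
each demand `i` is supplied without interruption on `[tau i, tau i + s i] ⊆ [0,1]`,
with duration `s i ∈ [l, r]`. -/
structure Policy (l r : ℝ) (n : ℕ) where
  tau : Fin n → ℝ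
  s : Fin n → ℝ
  tau_nonneg : ∀ i, 0 ≤ tau i
  fits : ∀ i, tau i + s i ≤ 1
  s_lb : ∀ i, l ≤ s i
  s_ub : ∀ i, s i ≤ r

/-- The instantaneous power at time `t`: the sum of the consumption rates
`A i / s i` of the demands active at `t` (half-open supply intervals). -/
noncomputable def power {l r : ℝ} {n : ℕ} (A : Fin n → ℝ) (π : Policy l r n) (t : ℝ) : ℝ :=
  ∑ i : Fin n, Set.indicator (Set.Ico (π.tau i) (π.tau i + π.s i)) (fun _ => A i / π.s i) t

/-- The power peak of a policy: the supremum of the instantaneous power over `[0,1)`. -/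
noncomputable def peak {l r : ℝ} {n : ℕ} (A : Fin n → ℝ) (π : Policy l r n) : ℝ :=
  sSup (power A π '' Set.Ico (0 : ℝ) 1)

/-- The optimal power peak: the infimum of the power peaks over all policies. -/
noncomputable def Popt (l r : ℝ) (n : ℕ) (A : Fin n → ℝ) : ℝ :=
  sInf {p : ℝ | ∃ π : Policy l r n, p = peak A π}

/-! The power integrates to `∑ i, A i` over `[0, 1)`, so its peak is at least the total energy.
In the bad region put `k = ⌊1/r⌋`: every supply interval is longer than `1/(k+1)`, hence
contains one of the `k` grid points `(j+1)/(k+1)`, and the powers at these points add up to at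
least `∑ i, A i / r`.
For the upper bound cut `[0, 1)` into `m` slots of common length `s` (`m = ⌈1/r⌉`, `s = 1/m` in
the good region, `m = k`, `s = r` otherwise) and distribute the demands over the slots by list
scheduling, so that every slot receives energy at most `∑ i, A i / m + max A`. -/

section Load

variable {ι κ : Type*} [DecidableEq κ]

def load (s : Finset ι) (a : ι → ℝ) (f : ι → κ) (j : κ) : ℝ := ∑ i ∈ s with f i = j, a i

lemma load_insert_update [DecidableEq ι] {s : Finset ι} {x : ι} (hx : x ∉ s) (a : ι → ℝ)
    (f : ι → κ) (j₀ j : κ) :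
    load (insert x s) a (Function.update f x j₀) j = load s a f j + if j₀ = j then a x else 0 := by
  have hs : ∑ i ∈ s with Function.update f x j₀ i = j, a i = load s a f j := by
    refine sum_congr (filter_congr fun i hi => ?_) fun _ _ => rfl
    rw [Function.update_of_ne (ne_of_mem_of_not_mem hi hx)]
  unfold load at hs ⊢
  rw [filter_insert, Function.update_self]
  split_ifs with h
  · rw [sum_insert (by simp [hx]), hs, add_comm]
  · rw [hs, add_zero]

lemma sum_load [Fintype κ] (s : Finset ι) (a : ι → ℝ) (f : ι → κ) :
    ∑ j, load s a f j = ∑ i ∈ s, a i :=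
  sum_fiberwise s f a

/-- Graham's list scheduling: give each item to a currently least loaded machine. -/
lemma exists_load_le_load_add [DecidableEq ι] [Finite κ] [Nonempty κ] (s : Finset ι)
    (a : ι → ℝ) {M : ℝ} (hM : 0 ≤ M) (ha : ∀ i ∈ s, 0 ≤ a i) (haM : ∀ i ∈ s, a i ≤ M) :
    ∃ f : ι → κ, ∀ j j', load s a f j ≤ load s a f j' + M := by
  induction s using Finset.induction_on with
  | empty => exact ⟨fun _ => Classical.arbitrary κ, fun _ _ => by simp [load, hM]⟩
  | insert x s hx ih =>
    obtain ⟨f, hf⟩ := ih (fun i hi => ha i (mem_insert_of_mem hi))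
      (fun i hi => haM i (mem_insert_of_mem hi))
    obtain ⟨j₀, hj₀⟩ := Finite.exists_min (load s a f)
    refine ⟨Function.update f x j₀, fun j j' => ?_⟩
    have hax := ha x (mem_insert_self x s)
    have haxM := haM x (mem_insert_self x s)
    have hjj' := hf j j'
    have hjj₀ := hf j j₀
    have hj₀j' := hj₀ j'
    simp only [load_insert_update hx]
    split_ifs <;> subst_vars <;> linarith

lemma exists_load_le [DecidableEq ι] [Fintype κ] [Nonempty κ] (s : Finset ι)
    (a : ι → ℝ) {M : ℝ} (hM : 0 ≤ M) (ha : ∀ i ∈ s, 0 ≤ a i) (haM : ∀ i ∈ s, a i ≤ M) :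
    ∃ f : ι → κ, ∀ j, load s a f j ≤ (∑ i ∈ s, a i) / Fintype.card κ + M := by
  obtain ⟨f, hf⟩ := exists_load_le_load_add (κ := κ) s a hM ha haM
  obtain ⟨j₀, hj₀⟩ := Finite.exists_min (load s a f)
  refine ⟨f, fun j => (hf j j₀).trans (add_le_add_left ?_ M)⟩
  rw [le_div_iff₀ (by exact_mod_cast Fintype.card_pos), ← sum_load s a f, mul_comm,
    ← nsmul_eq_mul]
  exact card_nsmul_le_sum _ _ _ fun j _ => hj₀ j

end Load

open MeasureTheory

section

variable {l r : ℝ} {n : ℕ} {A : Fin n → ℝ}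

lemma Policy.s_pos (π : Policy l r n) (hl : 0 < l) (i : Fin n) : 0 < π.s i :=
  hl.trans_le (π.s_lb i)

lemma Policy.Ico_subset (π : Policy l r n) (i : Fin n) :
    Ico (π.tau i) (π.tau i + π.s i) ⊆ Ico 0 1 :=
  Ico_subset_Ico (π.tau_nonneg i) (π.fits i)

lemma power_nonneg (π : Policy l r n) (hl : 0 < l) (hA : ∀ i, 0 ≤ A i) (t : ℝ) :
    0 ≤ power A π t :=
  sum_nonneg fun i _ => indicator_nonneg (fun _ _ => div_nonneg (hA i) (π.s_pos hl i).le) t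

lemma bddAbove_power_image (π : Policy l r n) (hl : 0 < l) (hA : ∀ i, 0 ≤ A i) (S : Set ℝ) :
    BddAbove (power A π '' S) := by
  refine ⟨∑ i, A i / π.s i, ?_⟩
  rintro _ ⟨t, -, rfl⟩
  exact sum_le_sum fun i _ =>
    indicator_apply_le' (fun _ => le_rfl) fun _ => div_nonneg (hA i) (π.s_pos hl i).le

lemma power_le_peak (π : Policy l r n) (hl : 0 < l) (hA : ∀ i, 0 ≤ A i) {t : ℝ}
    (ht : t ∈ Ico (0 : ℝ) 1) : power A π t ≤ peak A π :=
  le_csSup (bddAbove_power_image π hl hA _) (Set.mem_image_of_mem _ ht)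

lemma peak_nonneg (π : Policy l r n) (hl : 0 < l) (hA : ∀ i, 0 ≤ A i) : 0 ≤ peak A π :=
  (power_nonneg π hl hA 0).trans (power_le_peak π hl hA ⟨le_rfl, one_pos⟩)

lemma peak_le {π : Policy l r n} {B : ℝ} (h : ∀ t ∈ Ico (0 : ℝ) 1, power A π t ≤ B) :
    peak A π ≤ B :=
  csSup_le ((Set.nonempty_Ico.2 one_pos).image _) (forall_mem_image.2 h)

lemma integrable_power_indicator (π : Policy l r n) (i : Fin n) :
    Integrable (indicator (Ico (π.tau i) (π.tau i + π.s i)) fun _ => A i / π.s i)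
      (volume.restrict (Ico 0 1)) :=
  (integrable_const _).indicator measurableSet_Ico

lemma integral_power (π : Policy l r n) (hl : 0 < l) :
    ∫ t in Ico 0 1, power A π t = ∑ i, A i := by
  unfold power
  rw [integral_finsetSum _ fun i _ => integrable_power_indicator π i]
  refine sum_congr rfl fun i _ => ?_
  rw [integral_indicator_const _ measurableSet_Ico, measureReal_restrict_apply measurableSet_Ico,
    inter_eq_self_of_subset_left (π.Ico_subset i),
    Real.volume_real_Ico_of_le (le_add_of_nonneg_right (π.s_pos hl i).le), add_sub_cancel_left,
    smul_eq_mul, mul_div_cancel₀ _ (π.s_pos hl i).ne']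

lemma sum_le_peak (π : Policy l r n) (hl : 0 < l) (hA : ∀ i, 0 ≤ A i) :
    ∑ i, A i ≤ peak A π := by
  have hint : IntegrableOn (power A π) (Ico 0 1) :=
    integrable_finsetSum _ fun i _ => integrable_power_indicator π i
  calc ∑ i, A i = ∫ t in Ico 0 1, power A π t := (integral_power π hl).symm
    _ ≤ ∫ _ in Ico (0 : ℝ) 1, peak A π :=
      setIntegral_mono_on hint (integrableOn_const (by simp)) measurableSet_Ico
        fun t ht => power_le_peak π hl hA ht
    _ = peak A π := by simp

lemma exists_grid_point_mem_Ico {τ s : ℝ} {k : ℕ} (hτ : 0 ≤ τ) (hfit : τ + s ≤ 1)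
    (hs : 1 < s * (k + 1)) : ∃ j ∈ range k, ((j : ℝ) + 1) / (k + 1) ∈ Ico τ (τ + s) := by
  have hk : (0 : ℝ) < k + 1 := by positivity
  set j := ⌊τ * (k + 1)⌋₊
  have hj_lt : τ * (k + 1) < j + 1 := Nat.lt_floor_add_one _
  have hj_le : (j : ℝ) ≤ τ * (k + 1) := Nat.floor_le (by positivity)
  have hj_lt' : (j : ℝ) + 1 < (τ + s) * (k + 1) := by linarith
  refine ⟨j, mem_range.2 ?_, (le_div_iff₀ hk).2 hj_lt.le, (div_lt_iff₀ hk).2 hj_lt'⟩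
  have : (j : ℝ) < k := by nlinarith
  exact_mod_cast this

lemma grid_point_mem_Ico {j k : ℕ} (hj : j ∈ range k) :
    ((j : ℝ) + 1) / (k + 1) ∈ Ico (0 : ℝ) 1 := by
  have : (j : ℝ) + 1 < k + 1 := by exact_mod_cast Nat.succ_lt_succ (mem_range.1 hj)
  exact ⟨by positivity, (div_lt_one (by positivity)).2 this⟩

lemma sum_div_le_mul_peak (π : Policy l r n) (hl : 0 < l) (hA : ∀ i, 0 ≤ A i) {k : ℕ}
    (hk : 1 < l * (k + 1)) : (∑ i, A i) / r ≤ k * peak A π := by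
  set grid : ℕ → ℝ := fun j => ((j : ℝ) + 1) / (k + 1)
  calc (∑ i, A i) / r = ∑ i, A i / r := sum_div _ _ _
    _ ≤ ∑ i, ∑ j ∈ range k,
          indicator (Ico (π.tau i) (π.tau i + π.s i)) (fun _ => A i / π.s i) (grid j) := by
      refine sum_le_sum fun i _ => ?_
      have hrate : 0 ≤ A i / π.s i := div_nonneg (hA i) (π.s_pos hl i).le
      obtain ⟨j, hj, hmem⟩ := exists_grid_point_mem_Ico (π.tau_nonneg i) (π.fits i)
        (hk.trans_le (by gcongr; exact π.s_lb i))
      calc A i / r ≤ A i / π.s i := div_le_div_of_nonneg_left (hA i) (π.s_pos hl i) (π.s_ub i)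
        _ = _ := (indicator_of_mem hmem fun _ => A i / π.s i).symm
        _ ≤ _ := single_le_sum (f := fun j => indicator _ _ (grid j))
          (fun j _ => indicator_nonneg (fun _ _ => hrate) _) hj
    _ = ∑ j ∈ range k, power A π (grid j) := sum_comm
    _ ≤ ∑ _j ∈ range k, peak A π :=
      sum_le_sum fun j hj => power_le_peak π hl hA (grid_point_mem_Ico hj)
    _ = k * peak A π := by simp

lemma mem_Ico_mul_iff_floor_eq {s t : ℝ} (hs : 0 < s) (ht : 0 ≤ t) (k : ℕ) :
    t ∈ Ico (k * s) (k * s + s) ↔ ⌊t / s⌋₊ = k := by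
  rw [Nat.floor_eq_iff (div_nonneg ht hs.le), le_div_iff₀ hs, div_lt_iff₀ hs, add_mul, one_mul]
  rfl

def slotPolicy {m : ℕ} (f : Fin n → Fin m) {s : ℝ} (hl : 0 < l) (hls : l ≤ s) (hsr : s ≤ r)
    (hms : m * s ≤ 1) : Policy l r n where
  tau i := f i * s
  s _ := s
  tau_nonneg i := by have := hl.trans_le hls; positivity
  fits i := by
    have hf : ((f i : ℕ) : ℝ) + 1 ≤ m := by exact_mod_cast (f i).isLt
    nlinarith [hl.trans_le hls]
  s_lb _ := hls
  s_ub _ := hsr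

section Slots

variable {m : ℕ} {f : Fin n → Fin m} {s : ℝ} {hl : 0 < l} {hls : l ≤ s} {hsr : s ≤ r}
  {hms : m * s ≤ 1}

lemma power_slotPolicy {t : ℝ} (ht : 0 ≤ t) :
    power A (slotPolicy f hl hls hsr hms) t = (∑ i with (f i : ℕ) = ⌊t / s⌋₊, A i) / s := by
  have hs : 0 < s := hl.trans_le hls
  rw [sum_div, sum_filter]
  refine sum_congr rfl fun i _ => ?_
  simp only [slotPolicy, indicator_apply, mem_Ico_mul_iff_floor_eq hs ht, eq_comm]

lemma peak_slotPolicy_le {B : ℝ} (hB : ∀ j, load univ A f j ≤ B) (hB₀ : 0 ≤ B) :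
    peak A (slotPolicy f hl hls hsr hms) ≤ B / s := by
  have hs : 0 < s := hl.trans_le hls
  refine peak_le fun t ht => ?_
  rw [power_slotPolicy ht.1]
  gcongr
  by_cases hk : ⌊t / s⌋₊ < m
  · calc _ = load univ A f ⟨_, hk⟩ :=
          sum_congr (filter_congr fun i _ => Fin.ext_iff.symm) fun _ _ => rfl
      _ ≤ B := hB _
  · rw [filter_false_of_mem fun i _ => ((f i).isLt.trans_le (not_lt.1 hk)).ne, sum_empty]
    exact hB₀

end Slots

lemma exists_peak_le (hl : 0 < l) (hA : ∀ i, 0 ≤ A i) {m : ℕ} (hm : 0 < m) {s : ℝ}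
    (hls : l ≤ s) (hsr : s ≤ r) (hms : m * s ≤ 1) :
    ∃ π : Policy l r n, peak A π ≤ (∑ i, A i) / (m * s) + (⨆ i, A i) / l := by
  have hM : 0 ≤ ⨆ i, A i := Real.iSup_nonneg hA
  have hAM (i) : A i ≤ ⨆ i, A i := le_ciSup (finite_range A).bddAbove i
  have : NeZero m := ⟨hm.ne'⟩
  obtain ⟨f, hf⟩ := exists_load_le (κ := Fin m) univ A hM (fun i _ => hA i) fun i _ => hAM i
  rw [Fintype.card_fin] at hf
  refine ⟨slotPolicy f hl hls hsr hms, (peak_slotPolicy_le hf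
    (add_nonneg (div_nonneg (sum_nonneg fun i _ => hA i) m.cast_nonneg) hM)).trans ?_⟩
  rw [add_div, div_div]
  gcongr

lemma le_Popt (hlr : l ≤ r) (hr : r ≤ 1) {b : ℝ} (h : ∀ π : Policy l r n, b ≤ peak A π) :
    b ≤ Popt l r n A :=
  le_csInf ⟨_, ⟨fun _ => 0, fun _ => l, fun _ => le_rfl, fun _ => by linarith, fun _ => le_rfl,
    fun _ => hlr⟩, rfl⟩ (by rintro _ ⟨π, rfl⟩; exact h π)

lemma Popt_le_peak (hl : 0 < l) (hA : ∀ i, 0 ≤ A i) (π : Policy l r n) : Popt l r n A ≤ peak A π :=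
  csInf_le ⟨0, by rintro _ ⟨π, rfl⟩; exact peak_nonneg π hl hA⟩ ⟨π, rfl⟩

lemma Popt_bounds_of_ceil_le (hl : 0 < l) (hlr : l ≤ r) (hr : r ≤ 1) (hA : ∀ i, 0 ≤ A i)
    (hgood : (⌈1 / r⌉ : ℝ) ≤ 1 / l) :
    ∑ i, A i ≤ Popt l r n A ∧ Popt l r n A ≤ ∑ i, A i + (⨆ i, A i) / l := by
  have hx : 0 < 1 / r := one_div_pos.2 (hl.trans_le hlr)
  set m := ⌈1 / r⌉₊
  have hm : (0 : ℝ) < m := by exact_mod_cast Nat.ceil_pos.2 hx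
  have hml : (m : ℝ) ≤ 1 / l := by rwa [natCast_ceil_eq_intCast_ceil hx.le]
  obtain ⟨π, hπ⟩ := exists_peak_le (A := A) hl hA (Nat.ceil_pos.2 hx) ((le_one_div hl hm).2 hml)
    ((one_div_le hm (hl.trans_le hlr)).2 (Nat.le_ceil _)) (mul_one_div_cancel hm.ne').le
  refine ⟨le_Popt hlr hr fun π => sum_le_peak π hl hA, (Popt_le_peak hl hA π).trans ?_⟩
  rwa [mul_one_div_cancel hm.ne', div_one] at hπ

lemma Popt_bounds_of_one_div_lt_ceil (hl : 0 < l) (hlr : l ≤ r) (hr : r ≤ 1) (hA : ∀ i, 0 ≤ A i)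
    (hbad : 1 / l < (⌈1 / r⌉ : ℝ)) :
    (∑ i, A i) / (r * ⌊1 / r⌋) ≤ Popt l r n A ∧
      Popt l r n A ≤ (∑ i, A i) / (r * ⌊1 / r⌋) + (⨆ i, A i) / l := by
  have hr₀ : 0 < r := hl.trans_le hlr
  have hx : 1 ≤ 1 / r := one_le_one_div hr₀ hr
  set k := ⌊1 / r⌋₊
  have hk : (0 : ℝ) < k := by exact_mod_cast Nat.floor_pos.2 hx
  have hkr : k * r ≤ 1 := (le_div_iff₀ hr₀).1 (Nat.floor_le (by positivity))
  have hceil : (⌈1 / r⌉ : ℝ) ≤ k + 1 := by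
    rw [natCast_floor_eq_intCast_floor (by positivity)]
    exact_mod_cast Int.ceil_le_floor_add_one _
  have hlk : 1 < l * (k + 1) := by
    rw [mul_comm]; exact (div_lt_iff₀ hl).1 (hbad.trans_le hceil)
  obtain ⟨π, hπ⟩ := exists_peak_le (A := A) hl hA (Nat.floor_pos.2 hx) hlr le_rfl hkr
  rw [← natCast_floor_eq_intCast_floor (by positivity), mul_comm r]
  refine ⟨le_Popt hlr hr fun π => ?_, (Popt_le_peak hl hA π).trans hπ⟩
  rw [mul_comm, ← div_div, div_le_iff₀ hk, mul_comm]
  exact sum_div_le_mul_peak π hl hA hlk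

end

theorem main_theorem_general (l r : ℝ) (n : ℕ) (A : Fin n → ℝ)
    (hl : 0 < l) (hlr : l ≤ r) (hr : r ≤ 1) (hA : ∀ i, 0 < A i)
    (Abar : ℝ)
    (hAbar : Abar = if (⌈(1 : ℝ) / r⌉ : ℝ) ≤ 1 / l then ∑ i, A i
      else (∑ i, A i) / (r * (⌊(1 : ℝ) / r⌋ : ℝ))) :
    Abar ≤ Popt l r n A ∧ Popt l r n A ≤ Abar + (⨆ i, A i) / l := by
  have hA₀ (i : Fin n) : 0 ≤ A i := (hA i).le
  subst hAbar
  split_ifs with hgood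
  · exact Popt_bounds_of_ceil_le hl hlr hr hA₀ hgood
  · exact Popt_bounds_of_one_div_lt_ceil hl hlr hr hA₀ (not_le.1 hgood)

theorem main_theorem (l r : ℝ) (n : ℕ) (A : Fin n → ℝ)
    (hl : 0 < l) (hlr : l ≤ r) (hr : r ≤ 1) (hn : 1 ≤ n) (hA : ∀ i, 0 < A i)
    (Abar : ℝ)
    (hAbar : Abar = if (⌈(1 : ℝ) / r⌉ : ℝ) ≤ 1 / l then ∑ i, A i
      else (∑ i, A i) / (r * (⌊(1 : ℝ) / r⌋ : ℝ))) :
    Abar ≤ Popt l r n A ∧ Popt l r n A ≤ Abar + (⨆ i, A i) / l :=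
  main_theorem_general l r n A hl hlr hr hA Abar hAbar
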